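/- arXiv:math/0403011 — 2 statements merged into one kernel-verified Lean document; each statement's English description precedes it below -/
import Mathlib

section
/- For every integer m ≥ 2, every α ∈ ℂ and every n ∈ ℕ, the Tchebycheff m-polynomial values T_n = h_0(n·α) satisfy the recurrence h_0(α) · h_0(n·α) = (1/m) · Σ_{s=0}^{m−1} h_0((n + ω^s) · α), where ω = exp(2πi/m); i.e., with x = h_0(α), x·T_n(x) = (1/m)·Σ_{s∈Z_m} T_{n+ω^s}(x). -/
open Complex Finset

/-- `ω = exp(2πi/m)`, the primitive `m`-th root of unity. -/
noncomputable def om (m : ℕ) : ℂ := Complex.exp (2 * Real.pi * Complex.I / m)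

/-- The `m`-th order hyperbolic function
`h_k(z) = (1/m) · Σ_{s=0}^{m−1} ω^{−k·s} · exp(ω^s · z)`. -/
noncomputable def hfun (m k : ℕ) (z : ℂ) : ℂ :=
  (1 / (m : ℂ)) * ∑ s ∈ Finset.range m, (om m) ^ (-((k * s : ℕ) : ℤ)) * Complex.exp ((om m) ^ s * z)

/-!
Write `h₀(z) = (1/m) Σₛ exp(ωˢ z)`. Since `s ↦ ωˢ` is `m`-periodic, `h₀(ωᵗ z) = h₀(z)`.
Expanding `h₀(w)` and rotating the argument of `h₀(z)` by the matching `ωᵗ` gives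
`h₀(z) h₀(w) = (1/m²) Σₜ Σₛ exp(ωᵗ w + ωᵗ ωˢ z) = (1/m) Σₛ h₀(w + ωˢ z)`,
and the recurrence is the case `z = α`, `w = n α`.
-/

theorem Function.Periodic.sum_range_comp_add_one {M : Type*} [AddCommMonoid M] {g : ℕ → M}
    {m : ℕ} (hg : Function.Periodic g m) :
    ∑ s ∈ range m, g (s + 1) = ∑ s ∈ range m, g s := by
  cases m with
  | zero => simp
  | succ m =>
    rw [sum_range_succ, sum_range_succ', ← hg 0, zero_add]

theorem Function.Periodic.sum_range_comp_add {M : Type*} [AddCommMonoid M] {g : ℕ → M}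
    {m : ℕ} (hg : Function.Periodic g m) (t : ℕ) :
    ∑ s ∈ range m, g (s + t) = ∑ s ∈ range m, g s := by
  induction t with
  | zero => simp
  | succ t ih =>
    rw [← ih, ← (hg.add_const t).sum_range_comp_add_one]
    exact sum_congr rfl fun s _ => by ring_nf

theorem sum_range_comp_pow_mul_pow {R M : Type*} [Monoid R] [AddCommMonoid M] {ζ : R} {m : ℕ}
    (hζ : ζ ^ m = 1) (f : R → M) (t : ℕ) :
    ∑ s ∈ range m, f (ζ ^ s * ζ ^ t) = ∑ s ∈ range m, f (ζ ^ s) := by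
  have hperiodic : Function.Periodic (fun s => f (ζ ^ s)) m := fun s => by
    simp only [pow_add, hζ, mul_one]
  simpa only [pow_add] using hperiodic.sum_range_comp_add t

theorem om_pow_self (m : ℕ) : om m ^ m = 1 := by
  rcases eq_or_ne m 0 with rfl | hm
  · exact pow_zero _
  · rw [om, ← Complex.exp_nat_mul, mul_div_cancel₀ _ (Nat.cast_ne_zero.mpr hm),
      Complex.exp_two_pi_mul_I]

theorem hfun_zero (m : ℕ) (z : ℂ) :
    hfun m 0 z = 1 / (m : ℂ) * ∑ s ∈ range m, exp (om m ^ s * z) := by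
  simp [hfun]

theorem hfun_zero_om_pow_mul (m t : ℕ) (z : ℂ) : hfun m 0 (om m ^ t * z) = hfun m 0 z := by
  simp only [hfun_zero, ← mul_assoc]
  rw [sum_range_comp_pow_mul_pow (om_pow_self m) (fun u => exp (u * z))]

theorem hfun_zero_mul_hfun_zero (m : ℕ) (z w : ℂ) :
    hfun m 0 z * hfun m 0 w = 1 / (m : ℂ) * ∑ s ∈ range m, hfun m 0 (w + om m ^ s * z) := by
  calc hfun m 0 z * hfun m 0 w
      = 1 / (m : ℂ) * ∑ t ∈ range m, exp (om m ^ t * w) * hfun m 0 (om m ^ t * z) := by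
        simp only [hfun_zero_om_pow_mul, hfun_zero m w, ← sum_mul]
        ring
    _ = 1 / (m : ℂ) * ∑ t ∈ range m, 1 / (m : ℂ) * ∑ s ∈ range m,
          exp (om m ^ t * (w + om m ^ s * z)) := by
        congr 1
        refine sum_congr rfl fun t _ => ?_
        rw [hfun_zero, mul_left_comm, mul_sum]
        congr 1
        refine sum_congr rfl fun s _ => ?_
        rw [← exp_add]
        ring_nf
    _ = _ := by
        simp only [hfun_zero, ← mul_sum]
        rw [sum_comm]

theorem tchebycheff_recurrence_general (m : ℕ) (α : ℂ) (n : ℕ) :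
    hfun m 0 α * hfun m 0 (n * α) =
      (1 / (m : ℂ)) * ∑ s ∈ Finset.range m, hfun m 0 (((n : ℂ) + (om m) ^ s) * α) := by
  simp only [hfun_zero_mul_hfun_zero, add_mul]

/-- The recurrence for the Tchebycheff `m`-polynomials `T_n = h_0(n·α)`:
`h_0(α) · h_0(n·α) = (1/m) · Σ_{s=0}^{m−1} h_0((n + ω^s)·α)`. -/
theorem tchebycheff_recurrence (m : ℕ) (hm : 2 ≤ m) (α : ℂ) (n : ℕ) :
    hfun m 0 α * hfun m 0 (n * α) =
      (1 / (m : ℂ)) * ∑ s ∈ Finset.range m, hfun m 0 (((n : ℂ) + (om m) ^ s) * α) :=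
  tchebycheff_recurrence_general m α n
end

section
/- Fix an integer m ≥ 2. For every α ∈ ℂ and every n ∈ ℕ, the n-th matrix power of the circulant matrix H(α) equals H(n·α): H(α)^n = H(n·α). In particular for m = 3, the matrix with rows (h_0(α), h_1(α), h_2(α)), (h_2(α), h_0(α), h_1(α)), (h_1(α), h_2(α), h_0(α)) raised to the n-th power has the same circulant form with entries h_j(n·α). -/
open Complex Finset Matrix

/-- The circulant matrix `H(α)` with `(i,k)` entry `h_{(k−i) mod m}(α)`. -/
noncomputable def Hmat (m : ℕ) (α : ℂ) : Matrix (Fin m) (Fin m) ℂ :=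
  Matrix.of fun i k => hfun m (((k : ℕ) + m - (i : ℕ)) % m) α

lemma om_ne_zero (m : ℕ) : om m ≠ 0 := Complex.exp_ne_zero _

lemma om_prim (m : ℕ) (hm : 2 ≤ m) : IsPrimitiveRoot (om m) m :=
  Complex.isPrimitiveRoot_exp m (by omega)

lemma om_pow_m (m : ℕ) (hm : 2 ≤ m) : om m ^ (m : ℤ) = 1 := by
  have := (om_prim m hm).pow_eq_one
  rw [zpow_natCast]; exact this

lemma om_zpow_dvd (m : ℕ) (hm : 2 ≤ m) {a b : ℤ} (h : (m:ℤ) ∣ a - b) :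
    om m ^ a = om m ^ b := by
  obtain ⟨k, hk⟩ := h
  have : a = b + (m:ℤ) * k := by linarith
  rw [this, zpow_add₀ (om_ne_zero m), _root_.zpow_mul, om_pow_m m hm, _root_.one_zpow, mul_one]

lemma sum_om_pow (m : ℕ) (hm : 2 ≤ m) (t : ℤ) :
    ∑ j ∈ range m, (om m) ^ (t * j) = if (m:ℤ) ∣ t then (m : ℂ) else 0 := by
  split_ifs with h
  · have : ∀ j ∈ range m, (om m) ^ (t * (j:ℤ)) = 1 := by
      intro j _
      rw [show (om m) ^ (t * (j:ℤ)) = (om m) ^ (t * (j:ℤ)) from rfl]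
      have : om m ^ (t * (j:ℤ)) = om m ^ (0:ℤ) := by
        apply om_zpow_dvd m hm
        simpa using h.mul_right (j:ℤ)
      simpa using this
    rw [Finset.sum_congr rfl this]
    simp
  · have hne : om m ^ t ≠ 1 := by
      intro hc
      exact h (((om_prim m hm).zpow_eq_one_iff_dvd t).mp hc)
    have : ∀ j ∈ range m, (om m) ^ (t * (j:ℤ)) = (om m ^ t) ^ j := by
      intro j _
      rw [_root_.zpow_mul, zpow_natCast]
    rw [Finset.sum_congr rfl this, geom_sum_eq hne]
    have : (om m ^ t) ^ m = 1 := by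
      rw [← zpow_natCast, ← _root_.zpow_mul, mul_comm, _root_.zpow_mul, om_pow_m m hm,
        _root_.one_zpow]
    rw [this]
    simp

noncomputable def gfun (m : ℕ) (x : ℤ) (z : ℂ) : ℂ :=
  (1 / (m : ℂ)) * ∑ s ∈ Finset.range m, (om m) ^ (-(x * s)) * Complex.exp ((om m) ^ s * z)

lemma hfun_eq_g (m k : ℕ) (z : ℂ) : hfun m k z = gfun m k z := by
  unfold hfun gfun
  norm_cast

lemma g_congr (m : ℕ) (hm : 2 ≤ m) {x y : ℤ} (h : (m:ℤ) ∣ x - y) (z : ℂ) :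
    gfun m x z = gfun m y z := by
  unfold gfun
  congr 1
  refine Finset.sum_congr rfl fun s _ => ?_
  congr 1
  apply om_zpow_dvd m hm
  have h2 := h.mul_right (s:ℤ)
  have h3 : -(x * ↑s) - -(y * ↑s) = -((x - y) * ↑s) := by ring
  rw [h3]
  exact dvd_neg.mpr h2

lemma dvd_iff_eq (m : ℕ) (hm : 2 ≤ m) {s t : ℕ} (hs : s < m) (ht : t < m) :
    (m:ℤ) ∣ ((t:ℤ) - s) ↔ t = s := by
  constructor
  · intro h
    have h0 : ((t:ℤ) - s) = 0 := by
      refine Int.eq_zero_of_dvd_of_natAbs_lt_natAbs h ?_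
      omega
    omega
  · intro h; simp [h]

lemma gconv (m : ℕ) (hm : 2 ≤ m) (α β : ℂ) (u v : ℤ) :
    ∑ j ∈ range m, gfun m ((j:ℤ) - u) α * gfun m (v - (j:ℤ)) β = gfun m (v - u) (α + β) := by
  have hm0 : (m:ℂ) ≠ 0 := Nat.cast_ne_zero.mpr (by omega)
  have hω := om_ne_zero m
  unfold gfun
  have step1 : ∀ j ∈ range m,
      ((1/(m:ℂ)) * ∑ s ∈ range m, om m ^ (-(((j:ℤ) - u) * s)) * Complex.exp (om m ^ s * α)) *
      ((1/(m:ℂ)) * ∑ t ∈ range m, om m ^ (-((v - (j:ℤ)) * t)) * Complex.exp (om m ^ t * β)) =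
      (1/(m:ℂ)) * (1/(m:ℂ)) * ∑ s ∈ range m, ∑ t ∈ range m,
        om m ^ (((t:ℤ) - s) * j) * (om m ^ (u * s - v * t) *
          (Complex.exp (om m ^ s * α) * Complex.exp (om m ^ t * β))) := by
    intro j _
    rw [mul_mul_mul_comm, Finset.sum_mul_sum]
    congr 1
    refine Finset.sum_congr rfl fun s _ => ?_
    refine Finset.sum_congr rfl fun t _ => ?_
    have hexp : (-(((j:ℤ) - u) * s)) + (-((v - (j:ℤ)) * t)) = ((t:ℤ) - s) * j + (u * s - v * t) := by
      ring
    rw [mul_mul_mul_comm, ← zpow_add₀ hω, hexp, zpow_add₀ hω, mul_assoc]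
  rw [Finset.sum_congr rfl step1, ← Finset.mul_sum, Finset.sum_comm]
  have step2 : ∀ s ∈ range m,
      (∑ j ∈ range m, ∑ t ∈ range m, om m ^ (((t:ℤ) - s) * j) * (om m ^ (u * s - v * t) *
        (Complex.exp (om m ^ s * α) * Complex.exp (om m ^ t * β))))
      = (m:ℂ) * (om m ^ (-((v - u) * s)) * Complex.exp (om m ^ s * (α + β))) := by
    intro s hs
    rw [Finset.sum_comm]
    have key : ∀ t ∈ range m,
        (∑ j ∈ range m, om m ^ (((t:ℤ) - s) * j) * (om m ^ (u * s - v * t) *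
          (Complex.exp (om m ^ s * α) * Complex.exp (om m ^ t * β)))) =
        (if (m:ℤ) ∣ ((t:ℤ) - s) then (m:ℂ) else 0) * (om m ^ (u * s - v * t) *
          (Complex.exp (om m ^ s * α) * Complex.exp (om m ^ t * β))) := by
      intro t _
      rw [← Finset.sum_mul, sum_om_pow m hm]
    rw [Finset.sum_congr rfl key]
    rw [Finset.sum_eq_single_of_mem s hs]
    · rw [if_pos (by simp), ← Complex.exp_add, ← mul_add]
      congr 2
      ring
    · intro t ht hts
      rw [if_neg, zero_mul]
      rw [dvd_iff_eq m hm (mem_range.mp hs) (mem_range.mp ht)]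
      exact hts
  rw [Finset.sum_congr rfl step2, ← Finset.mul_sum]
  field_simp
  ring

lemma mod_dvd (m : ℕ) (hm : 2 ≤ m) (a b : ℕ) (hb : b < m) :
    (m:ℤ) ∣ (((a + m - b) % m : ℕ) : ℤ) - ((a:ℤ) - b) := by
  have hle : b ≤ a + m := by omega
  have h1 := Nat.mod_add_div (a + m - b) m
  have h1' := congrArg (fun n : ℕ => (n : ℤ)) h1
  simp only [Nat.cast_add, Nat.cast_mul] at h1'
  rw [Nat.cast_sub hle, Nat.cast_add] at h1'
  exact ⟨1 - (((a + m - b) / m : ℕ) : ℤ), by linear_combination h1'⟩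

lemma Hmat_g (m : ℕ) (hm : 2 ≤ m) (α : ℂ) (i k : Fin m) :
    Hmat m α i k = gfun m (((k:ℕ):ℤ) - ((i:ℕ):ℤ)) α := by
  show hfun m (((k:ℕ) + m - (i:ℕ)) % m) α = _
  rw [hfun_eq_g]
  exact g_congr m hm (mod_dvd m hm k i i.isLt) α

lemma Hmat_mul (m : ℕ) (hm : 2 ≤ m) (α β : ℂ) :
    Hmat m α * Hmat m β = Hmat m (α + β) := by
  ext i k
  rw [Matrix.mul_apply]
  calc ∑ j : Fin m, Hmat m α i j * Hmat m β j k
      = ∑ j : Fin m, gfun m (((j:ℕ):ℤ) - ((i:ℕ):ℤ)) α * gfun m (((k:ℕ):ℤ) - ((j:ℕ):ℤ)) β := by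
        exact Finset.sum_congr rfl fun j _ => by rw [Hmat_g m hm, Hmat_g m hm]
    _ = ∑ j ∈ range m, gfun m ((j:ℤ) - ((i:ℕ):ℤ)) α * gfun m (((k:ℕ):ℤ) - (j:ℤ)) β :=
        Fin.sum_univ_eq_sum_range
          (fun j => gfun m ((j:ℤ) - ((i:ℕ):ℤ)) α * gfun m (((k:ℕ):ℤ) - (j:ℤ)) β) m
    _ = gfun m (((k:ℕ):ℤ) - ((i:ℕ):ℤ)) (α + β) := gconv m hm α β _ _
    _ = Hmat m (α + β) i k := (Hmat_g m hm _ i k).symm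

lemma Hmat_zero (m : ℕ) (hm : 2 ≤ m) : Hmat m 0 = 1 := by
  have hm0 : (m:ℂ) ≠ 0 := Nat.cast_ne_zero.mpr (by omega)
  ext i k
  rw [Hmat_g m hm, Matrix.one_apply]
  unfold gfun
  simp only [mul_zero, Complex.exp_zero, mul_one]
  have hrw : ∀ s ∈ range m, om m ^ (-((((k:ℕ):ℤ) - ((i:ℕ):ℤ)) * s)) =
      om m ^ ((-(((k:ℕ):ℤ) - ((i:ℕ):ℤ))) * s) := fun s _ => by rw [neg_mul]
  rw [Finset.sum_congr rfl hrw, sum_om_pow m hm]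
  have hd : ((m:ℤ) ∣ -(((k:ℕ):ℤ) - ((i:ℕ):ℤ))) ↔ i = k := by
    rw [dvd_neg, dvd_iff_eq m hm i.isLt k.isLt]
    exact ⟨fun h => (Fin.val_inj.mp h).symm, fun h => by rw [h]⟩
  by_cases h : i = k
  · rw [if_pos (hd.mpr h), if_pos h]
    field_simp
  · rw [if_neg (fun hc => h (hd.mp hc)), if_neg h, mul_zero]

/-- De Moivre formula: `H(α)^n = H(n·α)`. -/
theorem Hmat_pow (m : ℕ) (hm : 2 ≤ m) (α : ℂ) (n : ℕ) :
    (Hmat m α) ^ n = Hmat m ((n : ℂ) * α) := by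
  induction n with
  | zero =>
      simp only [pow_zero, Nat.cast_zero, zero_mul]
      exact (Hmat_zero m hm).symm
  | succ n ih =>
      rw [pow_succ, ih, Hmat_mul m hm]
      norm_num
      congr 1
      push_cast
      ring
end
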